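/- arXiv:math/0305385 — 2 statements merged into one kernel-verified Lean document; each statement's English description precedes it below -/
import Mathlib

section
/- Let a, t ∈ ℂ∖{0} and y ∈ ℂ∖{0}, and set z = (y + y⁻¹)/2. For every k ∈ ℤ with |t|·q^{k−1} < 1, the numbers v_k(z) = (−1)^k ₂φ₁(−ay, −a/y; −q; q, tq^k) satisfy the recurrence 2z·v_k(z) = ((1 + a²t q^{k−1})/(a t q^{k−1}))·v_{k+1}(z) − ((1 − t q^{k−1})/(a t q^{k−1}))·v_{k−1}(z). -/
open Complex Filter Topology

/-- Finite q-shifted factorial `(a;q)_n`. -/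
noncomputable def qPoch (q a : ℂ) (n : ℕ) : ℂ := ∏ i ∈ Finset.range n, (1 - a * q ^ i)

/-- Infinite q-shifted factorial `(a;q)_∞`. -/
noncomputable def qPochInf (q a : ℂ) : ℂ := ∏' i : ℕ, (1 - a * q ^ i)

/-- Real infinite q-shifted factorial. -/
noncomputable def qPochInfR (q x : ℝ) : ℝ := ∏' i : ℕ, (1 - x * q ^ i)

/-- Basic hypergeometric series `₂φ₁(a,b;c;q,w)`. -/
noncomputable def phi21 (q a b c w : ℂ) : ℂ :=
  ∑' n : ℕ, (qPoch q a n * qPoch q b n) / (qPoch q c n * qPoch q q n) * w ^ n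

/-- Basic hypergeometric series `₃φ₂(a₁,a₂,a₃;b₁,b₂;q,w)`. -/
noncomputable def phi32 (q a1 a2 a3 b1 b2 w : ℂ) : ℂ :=
  ∑' n : ℕ, (qPoch q a1 n * qPoch q a2 n * qPoch q a3 n) /
    (qPoch q b1 n * qPoch q b2 n * qPoch q q n) * w ^ n

/-- Renormalised Jacobi theta function `θ(w) = (w;q)_∞ (q/w;q)_∞`. -/
noncomputable def jtheta (q w : ℂ) : ℂ := qPochInf q w * qPochInf q (q / w)

/-- The solution `u_k(z)` of the recurrence. -/
noncomputable def usol (q a t y : ℂ) (k : ℤ) : ℂ :=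
  phi21 q (a * y) (a / y) (-q) (t * q ^ k)

/-- The solution `v_k(z)` of the recurrence. -/
noncomputable def vsol (q a t y : ℂ) (k : ℤ) : ℂ :=
  (-1 : ℂ) ^ k * phi21 q (-(a * y)) (-(a / y)) (-q) (t * q ^ k)

/-- The solution `F_k(y)` of the recurrence. -/
noncomputable def Fsol (q a t y : ℂ) (k : ℤ) : ℂ :=
  (a * y) ^ (-k) * phi21 q (a * y) (-(a * y)) (q * y ^ 2) (-(q ^ (2 - k)) / (a ^ 2 * t))

/-- The connection coefficient `c(y;a,t)`. -/
noncomputable def cfun (q a t y : ℂ) : ℂ :=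
  (qPochInf q (a / y) * qPochInf q (-q / (a * y)) * qPochInf q (a * y * t) *
      qPochInf q (q / (a * y * t))) /
  (qPochInf q (-q) * qPochInf q (y⁻¹ ^ 2) * qPochInf q t * qPochInf q (q / t))

/-- The connection coefficient `d(y;a,t)`. -/
noncomputable def dfun (q a t y : ℂ) : ℂ :=
  (qPochInf q (-(a * y)) * qPochInf q (q * y / a) * qPochInf q (-(a * t) / (q * y)) *
      qPochInf q (-(q ^ 2 * y) / (a * t))) /
  (qPochInf q (-1) * qPochInf q (q * y ^ 2) * qPochInf q (-(a ^ 2 * t) / q) *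
      qPochInf q (-(q ^ 2) / (a ^ 2 * t)))

noncomputable def cterm (q A B : ℂ) (n : ℕ) : ℂ :=
  (qPoch q A n * qPoch q B n) / (qPoch q (-q) n * qPoch q q n)

lemma qPoch_succ (q a : ℂ) (n : ℕ) : qPoch q a (n + 1) = qPoch q a n * (1 - a * q ^ n) :=
  Finset.prod_range_succ _ _

lemma one_sub_q_pow_ne (q : ℝ) (hq0 : 0 < q) (hq1 : q < 1) (i : ℕ) (hi : i ≠ 0) :
    (1 : ℂ) - (q : ℂ) ^ i ≠ 0 := by
  have h : (q : ℝ) ^ i < 1 := pow_lt_one₀ hq0.le hq1 hi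
  have : ((1 - q ^ i : ℝ) : ℂ) ≠ 0 := by
    exact_mod_cast ne_of_gt (by linarith : (0:ℝ) < 1 - q ^ i)
  simpa [sub_eq_zero] using this

lemma one_add_q_pow_ne (q : ℝ) (hq0 : 0 < q) (i : ℕ) :
    (1 : ℂ) + (q : ℂ) ^ i ≠ 0 := by
  have h : (0:ℝ) < q ^ i := by positivity
  have : ((1 + q ^ i : ℝ) : ℂ) ≠ 0 := by
    exact_mod_cast ne_of_gt (by linarith : (0:ℝ) < 1 + q ^ i)
  simpa using this

lemma qPoch_q_ne (q : ℝ) (hq0 : 0 < q) (hq1 : q < 1) (n : ℕ) :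
    qPoch (q:ℂ) (q:ℂ) n ≠ 0 := by
  rw [qPoch, Finset.prod_ne_zero_iff]
  intro i _
  have := one_sub_q_pow_ne q hq0 hq1 (i+1) (Nat.succ_ne_zero i)
  simpa [pow_succ, mul_comm] using this

lemma qPoch_negq_ne (q : ℝ) (hq0 : 0 < q) (n : ℕ) :
    qPoch (q:ℂ) (-(q:ℂ)) n ≠ 0 := by
  rw [qPoch, Finset.prod_ne_zero_iff]
  intro i _
  have := one_add_q_pow_ne q hq0 (i+1)
  simpa [pow_succ, mul_comm, sub_neg_eq_add] using this

lemma cterm_succ (q : ℝ) (hq0 : 0 < q) (hq1 : q < 1) (A B : ℂ) (n : ℕ) :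
    cterm (q:ℂ) A B (n+1) * (1 - (q:ℂ) ^ (2*(n+1))) =
      cterm (q:ℂ) A B n * ((1 - A * (q:ℂ) ^ n) * (1 - B * (q:ℂ) ^ n)) := by
  have hN := qPoch_negq_ne q hq0 n
  have hQ := qPoch_q_ne q hq0 hq1 n
  have h1 := one_sub_q_pow_ne q hq0 hq1 (n+1) (Nat.succ_ne_zero n)
  have h2 := one_add_q_pow_ne q hq0 (n+1)
  have h1' : (1 : ℂ) - (q:ℂ) * (q:ℂ) ^ n ≠ 0 := by
    have := h1; rw [pow_succ] at this; simpa [mul_comm] using this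
  have h2' : (1 : ℂ) - (-(q:ℂ)) * (q:ℂ) ^ n ≠ 0 := by
    have := h2; rw [pow_succ] at this
    simpa [sub_neg_eq_add, mul_comm] using this
  rw [cterm, cterm, qPoch_succ, qPoch_succ, qPoch_succ, qPoch_succ,
    div_mul_eq_mul_div, div_mul_eq_mul_div,
    div_eq_div_iff (mul_ne_zero (mul_ne_zero hN h2') (mul_ne_zero hQ h1'))
      (mul_ne_zero hN hQ)]
  ring

lemma cterm_succ' (q : ℝ) (hq0 : 0 < q) (hq1 : q < 1) (A B : ℂ) (n : ℕ) :
    cterm (q:ℂ) A B (n+1) =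
      cterm (q:ℂ) A B n * ((1 - A * (q:ℂ) ^ n) * (1 - B * (q:ℂ) ^ n)) /
        (1 - (q:ℂ) ^ (2*(n+1))) := by
  have hne : (1:ℂ) - (q:ℂ) ^ (2*(n+1)) ≠ 0 := one_sub_q_pow_ne q hq0 hq1 _ (by omega)
  rw [eq_div_iff hne]
  linear_combination cterm_succ q hq0 hq1 A B n

lemma summable_cterm (q : ℝ) (hq0 : 0 < q) (hq1 : q < 1) (A B w : ℂ)
    (hw : ‖w‖ < 1) :
    Summable (fun n : ℕ => cterm (q:ℂ) A B n * w ^ n) := by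
  set r : ℝ := (1 + ‖w‖) / 2 with hr
  have habs := norm_nonneg w
  have hr1 : r < 1 := by rw [hr]; linarith
  have hwr : ‖w‖ < r := by rw [hr]; linarith
  set g : ℕ → ℝ := fun n =>
    ‖w * ((1 - A * (q:ℂ) ^ n) * (1 - B * (q:ℂ) ^ n)) /
      (1 - (q:ℂ) ^ (2*(n+1)))‖ with hg
  have hq0' : ‖(q:ℂ)‖ < 1 := by
    rw [Complex.norm_real, Real.norm_eq_abs, abs_of_pos hq0]; exact hq1
  have hpow : Filter.Tendsto (fun n : ℕ => (q:ℂ) ^ n) atTop (nhds 0) :=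
    tendsto_pow_atTop_nhds_zero_of_norm_lt_one (by simpa using hq0')
  have hmono : Filter.Tendsto (fun n : ℕ => 2*(n+1)) atTop atTop := by
    apply tendsto_atTop_atTop_of_monotone
    · intro a b h; dsimp only; omega
    · intro b; exact ⟨b, by omega⟩
  have hpow2 : Filter.Tendsto (fun n : ℕ => (q:ℂ) ^ (2*(n+1))) atTop (nhds 0) :=
    hpow.comp hmono
  have hnum : Filter.Tendsto
      (fun n : ℕ => (1 - A * (q:ℂ) ^ n) * (1 - B * (q:ℂ) ^ n)) atTop (nhds 1) := by
    have h1 : Filter.Tendsto (fun n : ℕ => 1 - A * (q:ℂ) ^ n) atTop (nhds 1) := by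
      simpa using tendsto_const_nhds.sub (hpow.const_mul A)
    have h2 : Filter.Tendsto (fun n : ℕ => 1 - B * (q:ℂ) ^ n) atTop (nhds 1) := by
      simpa using tendsto_const_nhds.sub (hpow.const_mul B)
    simpa using h1.mul h2
  have hden : Filter.Tendsto (fun n : ℕ => (1:ℂ) - (q:ℂ) ^ (2*(n+1))) atTop (nhds 1) := by
    simpa using tendsto_const_nhds.sub hpow2
  have hin : Filter.Tendsto
      (fun n : ℕ => w * ((1 - A * (q:ℂ) ^ n) * (1 - B * (q:ℂ) ^ n)) /
        (1 - (q:ℂ) ^ (2*(n+1)))) atTop (nhds w) := by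
    have := (Filter.Tendsto.mul (tendsto_const_nhds (x := w)) hnum).div hden one_ne_zero
    simpa only [mul_one, div_one, Pi.div_def] using this
  have hgt : Filter.Tendsto g atTop (nhds ‖w‖) :=
    (continuous_norm.tendsto w).comp hin
  have hev : ∀ᶠ n in atTop, g n < r := hgt.eventually_lt_const hwr
  refine summable_of_ratio_norm_eventually_le hr1 ?_
  filter_upwards [hev] with n hn
  have hrec := cterm_succ' q hq0 hq1 A B n
  have heq : cterm (q:ℂ) A B (n+1) * w ^ (n+1) =
      (cterm (q:ℂ) A B n * w ^ n) *
        (w * ((1 - A * (q:ℂ) ^ n) * (1 - B * (q:ℂ) ^ n)) / (1 - (q:ℂ) ^ (2*(n+1)))) := by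
    rw [hrec]; ring
  rw [heq, norm_mul]
  have hnorm : ‖w * ((1 - A * (q:ℂ) ^ n) * (1 - B * (q:ℂ) ^ n)) /
      (1 - (q:ℂ) ^ (2*(n+1)))‖ = g n := rfl
  rw [hnorm, mul_comm]
  exact mul_le_mul_of_nonneg_right hn.le (norm_nonneg _)

lemma phi21_eq (q A B w : ℂ) : phi21 q A B (-q) w = ∑' n : ℕ, cterm q A B n * w ^ n := rfl

lemma key_identity (q : ℝ) (hq0 : 0 < q) (hq1 : q < 1) (A B w : ℂ)
    (hw : ‖w‖ < 1) :
    (1 - w) * phi21 (q:ℂ) A B (-(q:ℂ)) w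
      + (A + B) * w * phi21 (q:ℂ) A B (-(q:ℂ)) ((q:ℂ) * w)
      - (1 + A * B * w) * phi21 (q:ℂ) A B (-(q:ℂ)) ((q:ℂ) ^ 2 * w) = 0 := by
  have habsw := norm_nonneg w
  have hq : ‖((q:ℂ))‖ = q := by rw [Complex.norm_real, Real.norm_eq_abs, abs_of_pos hq0]
  have hw1 : ‖((q:ℂ) * w)‖ < 1 := by
    rw [norm_mul, hq]; nlinarith
  have hw2 : ‖((q:ℂ) ^ 2 * w)‖ < 1 := by
    rw [norm_mul, norm_pow, hq]; nlinarith
  have h0 := summable_cterm q hq0 hq1 A B w hw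
  have h1 := summable_cterm q hq0 hq1 A B ((q:ℂ) * w) hw1
  have h2 := summable_cterm q hq0 hq1 A B ((q:ℂ) ^ 2 * w) hw2
  set f : ℕ → ℂ := fun n => cterm (q:ℂ) A B n * (1 - (q:ℂ) ^ (2*n)) * w ^ n with hfdef
  have hf : Summable f := by
    apply (h0.sub h2).congr
    intro n
    simp only [hfdef]
    ring
  have hfs : Summable (fun n => f (n+1)) := (summable_nat_add_iff 1).2 hf
  have hterm : ∀ n : ℕ,
      (1 - w) * (cterm (q:ℂ) A B n * w ^ n)
        + (A + B) * w * (cterm (q:ℂ) A B n * ((q:ℂ) * w) ^ n)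
        - (1 + A * B * w) * (cterm (q:ℂ) A B n * ((q:ℂ) ^ 2 * w) ^ n)
      = f n - f (n+1) := by
    intro n
    have h := cterm_succ q hq0 hq1 A B n
    simp only [hfdef]
    linear_combination (w ^ (n+1)) * h
  rw [phi21_eq, phi21_eq, phi21_eq, ← tsum_mul_left, ← tsum_mul_left, ← tsum_mul_left,
    ← Summable.tsum_add (h0.mul_left _) (h1.mul_left _),
    ← Summable.tsum_sub ((h0.mul_left _).add (h1.mul_left _)) (h2.mul_left _)]
  rw [tsum_congr hterm, Summable.tsum_sub hf hfs, Summable.tsum_eq_zero_add hf]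
  have hf0 : f 0 = 0 := by simp [hfdef]
  rw [hf0]
  ring

theorem stmt1 (q : ℝ) (hq0 : 0 < q) (hq1 : q < 1)
    (a t y : ℂ) (ha : a ≠ 0) (ht : t ≠ 0) (hy : y ≠ 0)
    (z : ℂ) (hz : z = (y + y⁻¹) / 2)
    (k : ℤ) (hk : ‖t‖ * q ^ (k - 1) < 1) :
    2 * z * vsol q a t y k =
      ((1 + a ^ 2 * t * (q : ℂ) ^ (k - 1)) / (a * t * (q : ℂ) ^ (k - 1))) * vsol q a t y (k + 1) -
      ((1 - t * (q : ℂ) ^ (k - 1)) / (a * t * (q : ℂ) ^ (k - 1))) * vsol q a t y (k - 1) := by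
  have hqC : (q:ℂ) ≠ 0 := by
    simpa using ne_of_gt hq0
  set w : ℂ := t * (q:ℂ) ^ (k-1) with hwdef
  have hwabs : ‖w‖ < 1 := by
    rw [hwdef, norm_mul, norm_zpow, Complex.norm_real, Real.norm_eq_abs, abs_of_pos hq0]
    exact hk
  have e0 : (q:ℂ) ^ k = (q:ℂ) ^ (k-1) * q := by
    rw [← zpow_add_one₀ hqC (k-1)]; norm_num
  have e2 : (q:ℂ) ^ (k+1) = (q:ℂ) ^ (k-1) * (q:ℂ) ^ (2:ℕ) := by
    rw [← zpow_natCast, ← zpow_add₀ hqC (k-1)]; congr 1; push_cast; ring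
  have e0' : t * (q:ℂ) ^ k = (q:ℂ) * w := by rw [e0, hwdef]; ring
  have e2' : t * (q:ℂ) ^ (k+1) = (q:ℂ) ^ 2 * w := by rw [e2, hwdef]; ring
  have hm1 : ((-1:ℂ)) ^ (k+1) = -((-1:ℂ)) ^ k := by
    rw [zpow_add_one₀ (by norm_num : (-1:ℂ) ≠ 0)]; ring
  have hm2 : ((-1:ℂ)) ^ (k-1) = -((-1:ℂ)) ^ k := by
    rw [zpow_sub_one₀ (by norm_num : (-1:ℂ) ≠ 0)]; norm_num
  rw [vsol, vsol, vsol, e0', e2', hm1, hm2]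
  have key := key_identity q hq0 hq1 (-(a*y)) (-(a/y)) w hwabs
  set S0 := phi21 (q:ℂ) (-(a*y)) (-(a/y)) (-(q:ℂ)) w with hS0
  set S1 := phi21 (q:ℂ) (-(a*y)) (-(a/y)) (-(q:ℂ)) ((q:ℂ) * w) with hS1
  set S2 := phi21 (q:ℂ) (-(a*y)) (-(a/y)) (-(q:ℂ)) ((q:ℂ)^2 * w) with hS2
  have hqzk : (q:ℂ) ^ (k-1) ≠ 0 := zpow_ne_zero _ hqC
  have hwne : w ≠ 0 := mul_ne_zero ht hqzk
  have hene : ((-1:ℂ)) ^ k ≠ 0 := zpow_ne_zero _ (by norm_num)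
  subst hz
  suffices h : 2 * ((y + y⁻¹)/2) * S1 =
      (1 + a ^ 2 * t * (q : ℂ) ^ (k - 1)) / (a * t * (q : ℂ) ^ (k - 1)) * (-S2) -
      (1 - t * (q : ℂ) ^ (k - 1)) / (a * t * (q : ℂ) ^ (k - 1)) * (-S0) by
    linear_combination ((-1:ℂ)) ^ k * h
  rw [hwdef] at key
  linear_combination (norm := skip) (-1/(a*(t * (q : ℂ) ^ (k - 1)))) * key
  field_simp
  ring
end

section
/- Let ψ ∈ ℝ, r ∈ ℝ∖{0}, a = q^{1/2} e^{iψ}, t = i r e^{−iψ} with t ∉ ℝ_{>0}; let a_k = |r|^{−1} q^{−k} √(1 − 2 r q^k sin ψ + r² q^{2k}) and α_k = e^{iφ_k} q^{k/2}, where (φ_k)_{k∈ℤ} is any real sequence with φ_{k+1} − φ_k ≡ arg(1 + i r e^{iψ} q^k) − (π/2)·sgn(r) (mod 2π). Let x, y ∈ ℂ∖{0} and set z = (y + y⁻¹)/2. Then (the expressions being defined for all large N, since |t|q^N < 1 eventually): lim_{N→∞} (a_N/2)·( conj(α_{N+1} ũ_{N+1}(x)) · α_N u_N(z) − conj(α_N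 ũ_N(x)) · α_{N+1} u_{N+1}(z) ) = −q^{1/2}/(i r), and lim_{N→∞} (a_N/2)·( conj(α_{N+1} ũ_{N+1}(x)) · α_N v_N(z) − conj(α_N ũ_N(x)) · α_{N+1} v_{N+1}(z) ) = 0, where ũ_k(x) = ₂φ₁(a·conj(x), a/conj(x); −q; q, tq^k). (Combined with the connection formula F_k(y) = d(y;a,t)u_k(z) + d(y;−a,t)v_k(z), this is the evaluation lim_{N→∞}[conj(αu), αF(y)]_N = −(q^{1/2}/(ir))·d(y;a,t) of the paper.) -/
open Complex Filter Topology

section AuxLemmas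
open Finset

lemma one_sub_ge (q x : ℝ) (hq1 : q < 1) (hx0 : 0 ≤ x) (hxq : x ≤ q) :
    Real.exp (-(x * (1 - q)⁻¹)) ≤ 1 - x := by
  have hq' : 0 < 1 - q := by linarith
  have hx1 : 0 < 1 - x := by linarith
  have hu : (1 - q)⁻¹ * (1 - q) = 1 := inv_mul_cancel₀ hq'.ne'
  have hu0 : 0 ≤ (1 - q)⁻¹ := inv_nonneg.2 hq'.le
  have h1 : (1 - x)⁻¹ ≤ 1 + x * (1 - q)⁻¹ := by
    rw [inv_le_iff_one_le_mul₀ hx1]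
    nlinarith [mul_nonneg hx0 (mul_nonneg hu0 (sub_nonneg.2 hxq))]
  have h2 : 1 + x * (1 - q)⁻¹ ≤ Real.exp (x * (1 - q)⁻¹) := by
    have := Real.add_one_le_exp (x * (1 - q)⁻¹); linarith
  rw [Real.exp_neg]
  exact inv_le_of_inv_le₀ hx1 (h1.trans h2)

lemma geom_partial_le (q : ℝ) (hq0 : 0 < q) (hq1 : q < 1) (n : ℕ) :
    ∑ i ∈ range n, q ^ i ≤ (1 - q)⁻¹ := by
  have h := Summable.sum_le_tsum (range n) (fun i _ => by positivity)
    (summable_geometric_of_lt_one hq0.le hq1)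
  simpa [tsum_geometric_of_lt_one hq0.le hq1] using h

lemma qPoch_norm_le (q : ℝ) (hq0 : 0 < q) (hq1 : q < 1) (A : ℂ) (n : ℕ) :
    ‖qPoch (q:ℂ) A n‖ ≤ Real.exp (‖A‖ * (1 - q)⁻¹) := by
  rw [qPoch]
  calc ‖∏ i ∈ range n, (1 - A * (q:ℂ) ^ i)‖ = ∏ i ∈ range n, ‖1 - A * (q:ℂ) ^ i‖ := by
        simp [norm_prod]
    _ ≤ ∏ i ∈ range n, Real.exp (‖A‖ * q ^ i) := by
        apply prod_le_prod (fun i _ => norm_nonneg _)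
        intro i _
        have h1 : ‖1 - A * (q:ℂ) ^ i‖ ≤ 1 + ‖A‖ * q ^ i := by
          calc ‖1 - A * (q:ℂ) ^ i‖ ≤ ‖(1:ℂ)‖ + ‖A * (q:ℂ) ^ i‖ := norm_sub_le _ _
            _ = 1 + ‖A‖ * q ^ i := by
                simp [norm_mul, norm_pow, Complex.norm_real, abs_of_pos hq0]
        refine h1.trans ?_
        have := Real.add_one_le_exp (‖A‖ * q ^ i)
        linarith
    _ = Real.exp (∑ i ∈ range n, ‖A‖ * q ^ i) := by rw [Real.exp_sum]
    _ ≤ Real.exp (‖A‖ * (1 - q)⁻¹) := by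
        apply Real.exp_le_exp.2
        rw [← mul_sum]
        exact mul_le_mul_of_nonneg_left (geom_partial_le q hq0 hq1 n) (norm_nonneg _)

lemma qPoch_q_norm_ge (q : ℝ) (hq0 : 0 < q) (hq1 : q < 1) (n : ℕ) :
    Real.exp (-(q * (1 - q)⁻¹ * (1 - q)⁻¹)) ≤ ‖qPoch (q:ℂ) (q:ℂ) n‖ := by
  have key : ∀ i : ℕ, ‖(1 : ℂ) - (q:ℂ) * (q:ℂ) ^ i‖ = 1 - q ^ (i+1) := by
    intro i
    have h : ((1 - q ^ (i+1) : ℝ) : ℂ) = 1 - (q:ℂ) * (q:ℂ) ^ i := by push_cast; ring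
    rw [← h, Complex.norm_real, Real.norm_eq_abs]
    have : q ^ (i+1) < 1 := pow_lt_one₀ hq0.le hq1 (Nat.succ_ne_zero i)
    rw [abs_of_pos]; linarith
  rw [qPoch]
  rw [norm_prod]
  calc Real.exp (-(q * (1 - q)⁻¹ * (1 - q)⁻¹))
      ≤ Real.exp (-(∑ i ∈ range n, q ^ (i+1) * (1 - q)⁻¹)) := by
        apply Real.exp_le_exp.2
        rw [neg_le_neg_iff]
        rw [← sum_mul]
        apply mul_le_mul_of_nonneg_right _ (inv_nonneg.2 (by linarith))
        calc ∑ i ∈ range n, q ^ (i+1) = q * ∑ i ∈ range n, q ^ i := by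
              rw [mul_sum]; congr 1; ext i; ring
          _ ≤ q * (1 - q)⁻¹ := mul_le_mul_of_nonneg_left (geom_partial_le q hq0 hq1 n) hq0.le
    _ = ∏ i ∈ range n, Real.exp (-(q ^ (i+1) * (1 - q)⁻¹)) := by
        rw [← Real.exp_sum]; congr 1; simp
    _ ≤ ∏ i ∈ range n, ‖(1:ℂ) - (q:ℂ) * (q:ℂ) ^ i‖ := by
        apply prod_le_prod (fun i _ => (Real.exp_pos _).le)
        intro i _
        rw [key i]
        exact one_sub_ge q (q^(i+1)) hq1 (by positivity)
          (by calc q^(i+1) ≤ q^1 := pow_le_pow_of_le_one hq0.le hq1.le (by omega)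
                _ = q := pow_one q)

lemma qPoch_negq_norm_ge (q : ℝ) (hq0 : 0 < q) (hq1 : q < 1) (n : ℕ) :
    (1:ℝ) ≤ ‖qPoch (q:ℂ) (-(q:ℂ)) n‖ := by
  rw [qPoch, norm_prod]
  calc (1:ℝ) = ∏ i ∈ range n, 1 := by simp
    _ ≤ ∏ i ∈ range n, ‖(1:ℂ) - -(q:ℂ) * (q:ℂ) ^ i‖ := by
        apply prod_le_prod (fun i _ => zero_le_one)
        intro i _
        have h : ((1 + q ^ (i+1) : ℝ) : ℂ) = 1 - -(q:ℂ) * (q:ℂ) ^ i := by push_cast; ring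
        rw [← h, Complex.norm_real, Real.norm_eq_abs, abs_of_pos (by positivity)]
        have : 0 < q ^ (i+1) := by positivity
        linarith

lemma coef_norm_le (q : ℝ) (hq0 : 0 < q) (hq1 : q < 1) (A B : ℂ) (n : ℕ) :
    ‖(qPoch (q:ℂ) A n * qPoch (q:ℂ) B n) / (qPoch (q:ℂ) (-(q:ℂ)) n * qPoch (q:ℂ) (q:ℂ) n)‖
      ≤ Real.exp (‖A‖ * (1-q)⁻¹) * Real.exp (‖B‖ * (1-q)⁻¹) * Real.exp (q * (1-q)⁻¹ * (1-q)⁻¹) := by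
  rw [norm_div, norm_mul, norm_mul]
  have hd1 := qPoch_negq_norm_ge q hq0 hq1 n
  have hd2 := qPoch_q_norm_ge q hq0 hq1 n
  have hd2' : 0 < ‖qPoch (q:ℂ) (q:ℂ) n‖ := lt_of_lt_of_le (Real.exp_pos _) hd2
  have hnum : ‖qPoch (q:ℂ) A n‖ * ‖qPoch (q:ℂ) B n‖
      ≤ Real.exp (‖A‖ * (1-q)⁻¹) * Real.exp (‖B‖ * (1-q)⁻¹) :=
    mul_le_mul (qPoch_norm_le q hq0 hq1 A n) (qPoch_norm_le q hq0 hq1 B n)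
      (norm_nonneg _) (Real.exp_pos _).le
  have hden : Real.exp (-(q * (1-q)⁻¹ * (1-q)⁻¹)) ≤ ‖qPoch (q:ℂ) (-(q:ℂ)) n‖ * ‖qPoch (q:ℂ) (q:ℂ) n‖ := by
    calc Real.exp (-(q * (1-q)⁻¹ * (1-q)⁻¹)) ≤ 1 * ‖qPoch (q:ℂ) (q:ℂ) n‖ := by
          rw [one_mul]; exact hd2
      _ ≤ ‖qPoch (q:ℂ) (-(q:ℂ)) n‖ * ‖qPoch (q:ℂ) (q:ℂ) n‖ :=
          mul_le_mul_of_nonneg_right hd1 (norm_nonneg _)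
  calc ‖qPoch (q:ℂ) A n‖ * ‖qPoch (q:ℂ) B n‖ / (‖qPoch (q:ℂ) (-(q:ℂ)) n‖ * ‖qPoch (q:ℂ) (q:ℂ) n‖)
      ≤ (Real.exp (‖A‖ * (1-q)⁻¹) * Real.exp (‖B‖ * (1-q)⁻¹)) / Real.exp (-(q * (1-q)⁻¹ * (1-q)⁻¹)) := by
        apply div_le_div₀ (by positivity) hnum (Real.exp_pos _) hden
    _ = Real.exp (‖A‖ * (1-q)⁻¹) * Real.exp (‖B‖ * (1-q)⁻¹) * Real.exp (q * (1-q)⁻¹ * (1-q)⁻¹) := by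
        rw [Real.exp_neg, div_eq_mul_inv, inv_inv]

lemma phi21_tendsto_one (q : ℝ) (hq0 : 0 < q) (hq1 : q < 1) (A B : ℂ)
    (w : ℕ → ℂ) (hw : Tendsto w atTop (𝓝 0)) :
    Tendsto (fun N => phi21 (q:ℂ) A B (-(q:ℂ)) (w N)) atTop (𝓝 1) := by
  set C : ℝ := Real.exp (‖A‖ * (1-q)⁻¹) * Real.exp (‖B‖ * (1-q)⁻¹) * Real.exp (q * (1-q)⁻¹ * (1-q)⁻¹) with hC
  have hC0 : 0 < C := by positivity
  have key : ∀ v : ℂ, ‖v‖ ≤ 1/2 → ‖phi21 (q:ℂ) A B (-(q:ℂ)) v - 1‖ ≤ 2 * C * ‖v‖ := by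
    intro v hv
    set f : ℕ → ℂ := fun n =>
      (qPoch (q:ℂ) A n * qPoch (q:ℂ) B n) / (qPoch (q:ℂ) (-(q:ℂ)) n * qPoch (q:ℂ) (q:ℂ) n) * v ^ n with hf
    have hfb : ∀ n, ‖f n‖ ≤ C * ‖v‖ ^ n := by
      intro n
      rw [hf]
      simp only [norm_mul, norm_pow]
      exact mul_le_mul_of_nonneg_right (coef_norm_le q hq0 hq1 A B n) (by positivity)
    have hsum : Summable f := by
      apply Summable.of_norm_bounded (g := fun n => C * ‖v‖ ^ n)
      · exact (summable_geometric_of_lt_one (norm_nonneg v) (by linarith)).mul_left C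
      · exact hfb
    have hf0 : f 0 = 1 := by simp [hf, qPoch]
    have heq : phi21 (q:ℂ) A B (-(q:ℂ)) v - 1 = ∑' n : ℕ, f (n+1) := by
      rw [phi21, Summable.tsum_eq_zero_add hsum, hf0]
      ring
    rw [heq]
    have hs1 : Summable fun n : ℕ => ‖f (n+1)‖ := by
      apply Summable.of_norm_bounded (g := fun n => (C * ‖v‖) * (1/2) ^ n)
      · exact (summable_geometric_of_lt_one (by norm_num) (by norm_num)).mul_left _
      · intro n
        rw [Real.norm_eq_abs, _root_.abs_of_nonneg (norm_nonneg _)]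
        calc ‖f (n+1)‖ ≤ C * ‖v‖ ^ (n+1) := hfb (n+1)
          _ = (C * ‖v‖) * ‖v‖ ^ n := by ring
          _ ≤ (C * ‖v‖) * (1/2) ^ n := by
              apply mul_le_mul_of_nonneg_left _ (by positivity)
              exact pow_le_pow_left₀ (norm_nonneg v) hv n
    calc ‖∑' n : ℕ, f (n+1)‖ ≤ ∑' n : ℕ, ‖f (n+1)‖ := norm_tsum_le_tsum_norm hs1
      _ ≤ ∑' n : ℕ, (C * ‖v‖) * (1/2) ^ n := by
          apply Summable.tsum_le_tsum _ hs1
            ((summable_geometric_of_lt_one (by norm_num) (by norm_num)).mul_left _)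
          intro n
          calc ‖f (n+1)‖ ≤ C * ‖v‖ ^ (n+1) := hfb (n+1)
            _ = (C * ‖v‖) * ‖v‖ ^ n := by ring
            _ ≤ (C * ‖v‖) * (1/2) ^ n := by
                apply mul_le_mul_of_nonneg_left _ (by positivity)
                exact pow_le_pow_left₀ (norm_nonneg v) hv n
      _ = (C * ‖v‖) * (1 - 1/2)⁻¹ := by
          rw [tsum_mul_left, tsum_geometric_of_lt_one (by norm_num) (by norm_num)]
      _ = 2 * C * ‖v‖ := by ring
  rw [show (1:ℂ) = 0 + 1 by ring]
  have : Tendsto (fun N => phi21 (q:ℂ) A B (-(q:ℂ)) (w N) - 1) atTop (𝓝 0) := by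
    apply squeeze_zero_norm' _ (by simpa using (hw.norm.const_mul (2*C)))
    · have hev : ∀ᶠ N in atTop, ‖w N‖ ≤ 1/2 := by
        have h2 : ∀ᶠ N in atTop, ‖w N‖ < 1/2 :=
          (show Tendsto (fun N => ‖w N‖) atTop (𝓝 0) by simpa using hw.norm).eventually_lt_const (by norm_num)
        filter_upwards [h2] with N hN using hN.le
      filter_upwards [hev] with N hN
      exact key (w N) hN
  simpa using this.add_const 1

end AuxLemmas

theorem stmt12
    (q : ℝ) (hq0 : 0 < q) (hq1 : q < 1)
    (ψ r : ℝ) (hr : r ≠ 0)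
    (a t : ℂ)
    (ha : a = (Real.sqrt q : ℂ) * Complex.exp (Complex.I * ψ))
    (ht : t = Complex.I * (r : ℂ) * Complex.exp (-(Complex.I * ψ)))
    (htpos : ∀ x : ℝ, 0 < x → t ≠ (x : ℂ))
    (aseq : ℤ → ℝ)
    (haseq : ∀ k : ℤ, aseq k =
      |r|⁻¹ * q ^ (-k) * Real.sqrt (1 - 2 * r * q ^ k * Real.sin ψ + r ^ 2 * q ^ (2 * k)))
    (φ : ℤ → ℝ)
    (hφ : ∀ k : ℤ, ∃ m : ℤ, φ (k + 1) - φ k =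
      (1 + Complex.I * (r : ℂ) * Complex.exp (Complex.I * ψ) * (q : ℂ) ^ k).arg
        - (Real.pi / 2) * Real.sign r + 2 * Real.pi * m)
    (α : ℤ → ℂ)
    (hα : ∀ k : ℤ, α k = Complex.exp (Complex.I * φ k) * ((q ^ ((k : ℝ) / 2) : ℝ) : ℂ))
    (x y : ℂ) (hx : x ≠ 0) (hy : y ≠ 0)
    (z : ℂ) (hz : z = (y + y⁻¹) / 2) :
    Tendsto (fun N : ℕ =>
        ((aseq (N : ℤ) : ℝ) : ℂ) / 2 *
          (star (α ((N : ℤ) + 1) * usol q a t (star x) ((N : ℤ) + 1)) *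
              (α (N : ℤ) * usol q a t y (N : ℤ)) -
           star (α (N : ℤ) * usol q a t (star x) (N : ℤ)) *
              (α ((N : ℤ) + 1) * usol q a t y ((N : ℤ) + 1))))
      atTop (𝓝 (-(Real.sqrt q : ℂ) / (Complex.I * (r : ℂ)))) ∧
    Tendsto (fun N : ℕ =>
        ((aseq (N : ℤ) : ℝ) : ℂ) / 2 *
          (star (α ((N : ℤ) + 1) * usol q a t (star x) ((N : ℤ) + 1)) *
              (α (N : ℤ) * vsol q a t y (N : ℤ)) -
           star (α (N : ℤ) * usol q a t (star x) (N : ℤ)) *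
              (α ((N : ℤ) + 1) * vsol q a t y ((N : ℤ) + 1))))
      atTop (𝓝 0) := by
  classical
  have hqc0 : (q:ℂ) ≠ 0 := by
    simpa using (ne_of_gt hq0)
  have hrc : (r:ℂ) ≠ 0 := by simpa using hr
  have hsqq : (0:ℝ) < Real.sqrt q := Real.sqrt_pos.2 hq0
  -- the sequence w
  set w : ℕ → ℂ := fun N => 1 + Complex.I * (r:ℂ) * Complex.exp (Complex.I * ψ) * (q:ℂ) ^ (N:ℤ) with hwdef
  -- real components of w
  have hwre : ∀ N : ℕ, w N =
      ((1 - r * q ^ (N:ℕ) * Real.sin ψ : ℝ) : ℂ) + ((r * q ^ (N:ℕ) * Real.cos ψ : ℝ) : ℂ) * Complex.I := by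
    intro N
    rw [hwdef]
    simp only
    rw [show Complex.I * (ψ:ℂ) = (ψ:ℂ) * Complex.I from mul_comm _ _, Complex.exp_mul_I]
    rw [← Complex.ofReal_cos, ← Complex.ofReal_sin]
    rw [show ((q:ℂ) ^ (N:ℤ)) = (((q ^ (N:ℕ) : ℝ)):ℂ) by rw [Complex.ofReal_pow]; norm_cast]
    push_cast
    ring_nf
    rw [Complex.I_sq]
    ring
  -- w N is never zero
  have hw0 : ∀ N : ℕ, w N ≠ 0 := by
    intro N hW
    have h1 : Complex.I * (r:ℂ) * Complex.exp (Complex.I * ψ) * (q:ℂ) ^ (N:ℤ) = -1 := by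
      have := hW
      rw [hwdef] at this
      simp only at this
      linear_combination this
    have h2 := congrArg (starRingEnd ℂ) h1
    simp only [map_mul, Complex.conj_I, Complex.conj_ofReal, map_neg, map_one,
      ← Complex.exp_conj, map_zpow₀] at h2
    have h3 : t * (q:ℂ) ^ (N:ℤ) = 1 := by
      rw [ht]
      have h2' : -Complex.I * (r:ℂ) * Complex.exp (-(Complex.I * ψ)) * (q:ℂ) ^ (N:ℤ) = -1 := by
        rw [show -(Complex.I * (ψ:ℂ)) = -Complex.I * ψ by ring]
        exact h2
      linear_combination -h2'
    have h4 : t = ((q ^ (-(N:ℤ)) : ℝ) : ℂ) := by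
      rw [Complex.ofReal_zpow]
      rw [zpow_neg]
      field_simp at h3 ⊢
      linear_combination h3
    exact htpos (q ^ (-(N:ℤ))) (zpow_pos hq0 _) h4
  have habs : ∀ N : ℕ, (‖w N‖ : ℝ) =
      Real.sqrt (1 - 2 * r * q ^ ((N:ℤ)) * Real.sin ψ + r ^ 2 * q ^ (2 * (N:ℤ))) := by
    intro N
    rw [hwre N, Complex.norm_add_mul_I]
    congr 1
    rw [show ((q:ℝ) ^ ((N:ℤ)) = q ^ (N:ℕ)) from zpow_natCast q N,
       show ((q:ℝ) ^ (2*(N:ℤ)) = (q ^ (N:ℕ))^2) by rw [mul_comm, zpow_mul]; norm_cast]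
    nlinarith [Real.sin_sq_add_cos_sq ψ, sq_nonneg (r * q ^ (N:ℕ))]
  have habs0 : ∀ N : ℕ, ‖w N‖ ≠ 0 := fun N => by
    simpa using hw0 N
  -- the sign factor
  have hexp_real : ∀ θ : ℝ, Complex.exp (Complex.I * (θ:ℂ)) =
      ((Real.cos θ : ℝ):ℂ) + ((Real.sin θ : ℝ):ℂ) * Complex.I := by
    intro θ
    rw [mul_comm, Complex.exp_mul_I, ← Complex.ofReal_cos, ← Complex.ofReal_sin]
  have hsgn : Complex.exp (Complex.I * ((Real.pi / 2 * Real.sign r : ℝ) : ℂ)) = Complex.I * (Real.sign r : ℂ) := by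
    rcases lt_or_gt_of_ne hr with hneg | hpos
    · rw [Real.sign_of_neg hneg, hexp_real]
      rw [show Real.pi/2 * (-1:ℝ) = -(Real.pi/2) by ring]
      simp [Real.cos_pi_div_two, Real.sin_pi_div_two]
    · rw [Real.sign_of_pos hpos, hexp_real]
      rw [show Real.pi/2 * (1:ℝ) = Real.pi/2 by ring]
      simp [Real.cos_pi_div_two, Real.sin_pi_div_two]
  -- phase computation
  have hphase : ∀ N : ℕ,
      Complex.exp (Complex.I * (φ (N:ℤ) : ℂ) - Complex.I * (φ ((N:ℤ)+1) : ℂ)) =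
        (starRingEnd ℂ) (w N) / (‖w N‖ : ℂ) * (Complex.I * (Real.sign r : ℂ)) := by
    intro N
    obtain ⟨m, hm⟩ := hφ (N:ℤ)
    have hargw : (1 + Complex.I * (r:ℂ) * Complex.exp (Complex.I * ψ) * (q:ℂ) ^ (N:ℤ)).arg
        = (w N).arg := rfl
    rw [hargw] at hm
    have hφeq : φ (N:ℤ) - φ ((N:ℤ)+1) =
        -(w N).arg + Real.pi/2 * Real.sign r - 2*Real.pi*m := by linarith [hm]
    have h0 : ((φ (N:ℤ) : ℝ) : ℂ) - ((φ ((N:ℤ)+1) : ℝ) : ℂ) =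
        -(((w N).arg : ℝ):ℂ) + ((Real.pi/2 * Real.sign r : ℝ):ℂ) - 2*(Real.pi:ℂ)*(m:ℂ) := by
      have := congrArg (fun u : ℝ => (u : ℂ)) hφeq
      push_cast at this ⊢
      exact this
    have split : Complex.I * (φ (N:ℤ) : ℂ) - Complex.I * (φ ((N:ℤ)+1) : ℂ)
        = -(((w N).arg : ℝ):ℂ) * Complex.I + Complex.I * ((Real.pi/2 * Real.sign r : ℝ):ℂ)
          + (-(m:ℂ)) * (2*(Real.pi:ℂ)*Complex.I) := by
      linear_combination Complex.I * h0
    rw [split, Complex.exp_add, Complex.exp_add]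
    have hm1 : Complex.exp ((-(m:ℂ)) * (2*(Real.pi:ℂ)*Complex.I)) = 1 := by
      have h := Complex.exp_int_mul_two_pi_mul_I (-m)
      rw [show ((-m : ℤ):ℂ) = -(m:ℂ) by push_cast; ring] at h
      exact h
    have hargexp : Complex.exp (-(((w N).arg : ℝ):ℂ) * Complex.I)
        = (starRingEnd ℂ) (w N) / (‖w N‖ : ℂ) := by
      have h1 := Complex.norm_mul_exp_arg_mul_I (w N)
      have h2 := congrArg (starRingEnd ℂ) h1
      rw [map_mul, Complex.conj_ofReal, ← Complex.exp_conj,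
        show (starRingEnd ℂ) ((((w N).arg : ℝ):ℂ) * Complex.I) = -(((w N).arg : ℝ):ℂ) * Complex.I
          from by rw [map_mul, Complex.conj_I, Complex.conj_ofReal]; ring] at h2
      rw [eq_div_iff (by exact_mod_cast habs0 N)]
      linear_combination h2
    rw [hm1, mul_one, hargexp, hsgn]
  -- main identity for the alpha products
  have hsr : Real.sign r * |r|⁻¹ = r⁻¹ := by
    rcases lt_or_gt_of_ne hr with h | h
    · rw [Real.sign_of_neg h, abs_of_neg h, inv_neg]; ring
    · rw [Real.sign_of_pos h, abs_of_pos h]; ring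
  have hP : ∀ N : ℕ, ((aseq (N:ℤ) : ℝ) : ℂ) * ((starRingEnd ℂ) (α ((N:ℤ)+1)) * α (N:ℤ)) =
      (Real.sqrt q : ℂ) * Complex.I * (starRingEnd ℂ) (w N) / r := by
    intro N
    have ha' : (aseq (N:ℤ) : ℝ) = |r|⁻¹ * q ^ (-(N:ℤ)) * ‖w N‖ := by
      rw [haseq, habs N]
    have hee : Complex.exp (-(Complex.I * (φ ((N:ℤ)+1) : ℂ))) * Complex.exp (Complex.I * (φ (N:ℤ) : ℂ))
        = (starRingEnd ℂ) (w N) / (‖w N‖ : ℂ) * (Complex.I * (Real.sign r : ℂ)) := by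
      rw [← Complex.exp_add, show -(Complex.I * (φ ((N:ℤ)+1) : ℂ)) + Complex.I * (φ (N:ℤ) : ℂ)
        = Complex.I * (φ (N:ℤ) : ℂ) - Complex.I * (φ ((N:ℤ)+1) : ℂ) by ring]
      exact hphase N
    have hqq : (q:ℝ) ^ (((((N:ℤ)+1 : ℤ)):ℝ)/2) * q ^ ((((N:ℤ)):ℝ)/2) = q ^ (N:ℕ) * Real.sqrt q := by
      rw [← Real.rpow_add hq0, Real.sqrt_eq_rpow, ← Real.rpow_natCast q N, ← Real.rpow_add hq0]
      congr 1
      push_cast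
      ring
    have hz : (q:ℝ) ^ (-(N:ℤ)) * (q:ℝ) ^ (N:ℕ) = 1 := by
      rw [zpow_neg, zpow_natCast]
      field_simp
    have hreal : Real.sign r * |r|⁻¹ * ((q:ℝ) ^ (-(N:ℤ)) *
        ((q:ℝ) ^ (((((N:ℤ)+1 : ℤ)):ℝ)/2) * q ^ ((((N:ℤ)):ℝ)/2))) = Real.sqrt q / r := by
      rw [hqq]
      calc Real.sign r * |r|⁻¹ * ((q:ℝ) ^ (-(N:ℤ)) * (q ^ (N:ℕ) * Real.sqrt q))
          = (Real.sign r * |r|⁻¹) * (((q:ℝ) ^ (-(N:ℤ)) * q ^ (N:ℕ)) * Real.sqrt q) := by ring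
        _ = r⁻¹ * (1 * Real.sqrt q) := by rw [hsr, hz]
        _ = Real.sqrt q / r := by ring
    have hconj1 : (starRingEnd ℂ) (Complex.exp (Complex.I * (φ ((N:ℤ)+1) : ℂ)))
        = Complex.exp (-(Complex.I * (φ ((N:ℤ)+1) : ℂ))) := by
      rw [← Complex.exp_conj, map_mul, Complex.conj_I, Complex.conj_ofReal, neg_mul]
    have hAbs : ((‖w N‖ : ℝ) : ℂ) ≠ 0 := by exact_mod_cast habs0 N
    rw [hα ((N:ℤ)+1), hα (N:ℤ), ha']
    rw [map_mul, Complex.conj_ofReal, hconj1]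
    calc ((|r|⁻¹ * q ^ (-(N:ℤ)) * ‖w N‖ : ℝ) : ℂ) *
          (Complex.exp (-(Complex.I * (φ ((N:ℤ)+1) : ℂ))) * ((q ^ (((((N:ℤ)+1 : ℤ)):ℝ)/2) : ℝ):ℂ) *
            (Complex.exp (Complex.I * (φ (N:ℤ) : ℂ)) * ((q ^ ((((N:ℤ)):ℝ)/2) : ℝ):ℂ)))
        = (Complex.exp (-(Complex.I * (φ ((N:ℤ)+1) : ℂ))) * Complex.exp (Complex.I * (φ (N:ℤ) : ℂ))) *
            (((|r|⁻¹ : ℝ):ℂ) * (((q:ℝ) ^ (-(N:ℤ)) : ℝ):ℂ) * ((‖w N‖ : ℝ):ℂ) *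
              (((q ^ (((((N:ℤ)+1 : ℤ)):ℝ)/2) : ℝ):ℂ) * ((q ^ ((((N:ℤ)):ℝ)/2) : ℝ):ℂ))) := by
          push_cast
          ring
      _ = ((starRingEnd ℂ) (w N) / (‖w N‖ : ℂ) * (Complex.I * (Real.sign r : ℂ))) *
            (((|r|⁻¹ : ℝ):ℂ) * (((q:ℝ) ^ (-(N:ℤ)) : ℝ):ℂ) * ((‖w N‖ : ℝ):ℂ) *
              (((q ^ (((((N:ℤ)+1 : ℤ)):ℝ)/2) : ℝ):ℂ) * ((q ^ ((((N:ℤ)):ℝ)/2) : ℝ):ℂ))) := by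
          rw [hee]
      _ = (starRingEnd ℂ) (w N) * Complex.I *
            ((Real.sign r * |r|⁻¹ * ((q:ℝ) ^ (-(N:ℤ)) *
              ((q:ℝ) ^ (((((N:ℤ)+1 : ℤ)):ℝ)/2) * q ^ ((((N:ℤ)):ℝ)/2))) : ℝ) : ℂ) := by
          rw [div_mul_eq_mul_div, div_mul_eq_mul_div, div_eq_iff hAbs]
          push_cast
          ring
      _ = (Real.sqrt q : ℂ) * Complex.I * (starRingEnd ℂ) (w N) / r := by
          rw [hreal]
          push_cast
          field_simp
  have hP' : ∀ N : ℕ, ((aseq (N:ℤ) : ℝ) : ℂ) * ((starRingEnd ℂ) (α (N:ℤ)) * α ((N:ℤ)+1)) =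
      -((Real.sqrt q : ℂ) * Complex.I) * (w N) / r := by
    intro N
    have h := congrArg (starRingEnd ℂ) (hP N)
    simp only [map_mul, map_div₀, Complex.conj_ofReal, Complex.conj_I,
      RingHomCompTriple.comp_apply, RingHom.id_apply, Complex.conj_conj] at h
    calc ((aseq (N:ℤ) : ℝ) : ℂ) * ((starRingEnd ℂ) (α (N:ℤ)) * α ((N:ℤ)+1)) =
        ((aseq (N:ℤ) : ℝ) : ℂ) * (α ((N:ℤ)+1) * (starRingEnd ℂ) (α (N:ℤ))) := by ring
      _ = (Real.sqrt q : ℂ) * -Complex.I * (w N) / r := h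
      _ = -((Real.sqrt q : ℂ) * Complex.I) * (w N) / r := by ring
  -- limits
  have hqnorm : ‖(q:ℂ)‖ < 1 := by
    rw [Complex.norm_real, Real.norm_eq_abs, abs_of_pos hq0]; exact hq1
  have hpow : Tendsto (fun N : ℕ => (q:ℂ) ^ (N:ℤ)) atTop (𝓝 0) := by
    simpa [zpow_natCast] using tendsto_pow_atTop_nhds_zero_of_norm_lt_one hqnorm
  have hwlim : Tendsto w atTop (𝓝 1) := by
    have h := (hpow.const_mul (Complex.I * (r:ℂ) * Complex.exp (Complex.I * ψ))).const_add 1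
    simpa [hwdef] using h
  have ht0 : Tendsto (fun N : ℕ => t * (q:ℂ) ^ ((N:ℤ))) atTop (𝓝 0) := by
    simpa using hpow.const_mul t
  have ht0' : Tendsto (fun N : ℕ => t * (q:ℂ) ^ ((N:ℤ)+1)) atTop (𝓝 0) := by
    have h := ht0.mul_const (q:ℂ)
    simp only [zero_mul] at h
    apply h.congr
    intro N
    rw [zpow_add_one₀ hqc0]
    ring
  have hU : Tendsto (fun N : ℕ => usol q a t y (N:ℤ)) atTop (𝓝 1) := by
    simpa [usol] using phi21_tendsto_one q hq0 hq1 (a*y) (a/y) _ ht0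
  have hU1 : Tendsto (fun N : ℕ => usol q a t y ((N:ℤ)+1)) atTop (𝓝 1) := by
    simpa [usol] using phi21_tendsto_one q hq0 hq1 (a*y) (a/y) _ ht0'
  have hUx : Tendsto (fun N : ℕ => usol q a t (star x) (N:ℤ)) atTop (𝓝 1) := by
    simpa [usol] using phi21_tendsto_one q hq0 hq1 (a*star x) (a/star x) _ ht0
  have hUx1 : Tendsto (fun N : ℕ => usol q a t (star x) ((N:ℤ)+1)) atTop (𝓝 1) := by
    simpa [usol] using phi21_tendsto_one q hq0 hq1 (a*star x) (a/star x) _ ht0'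
  have hVp : Tendsto (fun N : ℕ => phi21 q (-(a*y)) (-(a/y)) (-(q:ℂ)) (t * (q:ℂ)^((N:ℤ)))) atTop (𝓝 1) :=
    phi21_tendsto_one q hq0 hq1 (-(a*y)) (-(a/y)) _ ht0
  have hVp1 : Tendsto (fun N : ℕ => phi21 q (-(a*y)) (-(a/y)) (-(q:ℂ)) (t * (q:ℂ)^((N:ℤ)+1))) atTop (𝓝 1) :=
    phi21_tendsto_one q hq0 hq1 (-(a*y)) (-(a/y)) _ ht0'
  -- abbreviations
  have hstar1 : (starRingEnd ℂ) (1:ℂ) = 1 := by simp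
  constructor
  · -- first limit
    have hfun1 : ∀ N : ℕ,
        ((aseq (N : ℤ) : ℝ) : ℂ) / 2 *
          (star (α ((N : ℤ) + 1) * usol q a t (star x) ((N : ℤ) + 1)) *
              (α (N : ℤ) * usol q a t y (N : ℤ)) -
           star (α (N : ℤ) * usol q a t (star x) (N : ℤ)) *
              (α ((N : ℤ) + 1) * usol q a t y ((N : ℤ) + 1)))
        = ((Real.sqrt q : ℂ) * Complex.I / (2 * r)) *
            (star (w N) * star (usol q a t (star x) ((N:ℤ)+1)) * usol q a t y (N:ℤ)
              + w N * star (usol q a t (star x) (N:ℤ)) * usol q a t y ((N:ℤ)+1)) := by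
      intro N
      have e1 := hP N
      have e2 := hP' N
      simp only [star_mul', Complex.star_def]
      linear_combination
        ((starRingEnd ℂ) (usol q a t ((starRingEnd ℂ) x) ((N:ℤ)+1)) * usol q a t y (N:ℤ) / 2) * e1
        - ((starRingEnd ℂ) (usol q a t ((starRingEnd ℂ) x) (N:ℤ)) * usol q a t y ((N:ℤ)+1) / 2) * e2
    have hbr : Tendsto (fun N : ℕ =>
        star (w N) * star (usol q a t (star x) ((N:ℤ)+1)) * usol q a t y (N:ℤ)
          + w N * star (usol q a t (star x) (N:ℤ)) * usol q a t y ((N:ℤ)+1))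
        atTop (𝓝 2) := by
      have h := ((hwlim.star.mul hUx1.star).mul hU).add ((hwlim.mul hUx.star).mul hU1)
      norm_num at h
      exact h
    have hlim := hbr.const_mul ((Real.sqrt q : ℂ) * Complex.I / (2 * r))
    have hval : ((Real.sqrt q : ℂ) * Complex.I / (2 * r)) * 2 = -(Real.sqrt q : ℂ) / (Complex.I * r) := by
      field_simp [Complex.I_ne_zero]
      linear_combination (Real.sqrt q : ℂ) * Complex.I_mul_I
    rw [hval] at hlim
    exact hlim.congr (fun N => (hfun1 N).symm)
  · -- second limit
    have hfun2 : ∀ N : ℕ,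
        ((aseq (N : ℤ) : ℝ) : ℂ) / 2 *
          (star (α ((N : ℤ) + 1) * usol q a t (star x) ((N : ℤ) + 1)) *
              (α (N : ℤ) * vsol q a t y (N : ℤ)) -
           star (α (N : ℤ) * usol q a t (star x) (N : ℤ)) *
              (α ((N : ℤ) + 1) * vsol q a t y ((N : ℤ) + 1)))
        = (-1 : ℂ)^(N:ℕ) * (((Real.sqrt q : ℂ) * Complex.I / (2 * r)) *
            (star (w N) * star (usol q a t (star x) ((N:ℤ)+1)) *
                phi21 q (-(a*y)) (-(a/y)) (-(q:ℂ)) (t * (q:ℂ)^((N:ℤ)))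
              - w N * star (usol q a t (star x) (N:ℤ)) *
                phi21 q (-(a*y)) (-(a/y)) (-(q:ℂ)) (t * (q:ℂ)^((N:ℤ)+1)))) := by
      intro N
      have e1 := hP N
      have e2 := hP' N
      simp only [star_mul', Complex.star_def, vsol]
      rw [show ((-1:ℂ) ^ ((N:ℤ)+1)) = -(-1:ℂ)^(N:ℤ) from by
        rw [zpow_add_one₀ (by norm_num : (-1:ℂ) ≠ 0)]; ring]
      rw [show ((-1:ℂ) ^ ((N:ℤ))) = (-1:ℂ)^(N:ℕ) from zpow_natCast _ _]
      linear_combination ((-1:ℂ)^(N:ℕ) * (starRingEnd ℂ) (usol q a t ((starRingEnd ℂ) x) ((N:ℤ)+1)) *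
          phi21 q (-(a*y)) (-(a/y)) (-(q:ℂ)) (t * (q:ℂ)^((N:ℤ))) / 2) * e1
        + ((-1:ℂ)^(N:ℕ) * (starRingEnd ℂ) (usol q a t ((starRingEnd ℂ) x) (N:ℤ)) *
          phi21 q (-(a*y)) (-(a/y)) (-(q:ℂ)) (t * (q:ℂ)^((N:ℤ)+1)) / 2) * e2
    have hbr2 : Tendsto (fun N : ℕ =>
        ((Real.sqrt q : ℂ) * Complex.I / (2 * r)) *
          (star (w N) * star (usol q a t (star x) ((N:ℤ)+1)) *
              phi21 q (-(a*y)) (-(a/y)) (-(q:ℂ)) (t * (q:ℂ)^((N:ℤ)))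
            - w N * star (usol q a t (star x) (N:ℤ)) *
              phi21 q (-(a*y)) (-(a/y)) (-(q:ℂ)) (t * (q:ℂ)^((N:ℤ)+1))))
        atTop (𝓝 0) := by
      have h := ((hwlim.star.mul hUx1.star).mul hVp).sub ((hwlim.mul hUx.star).mul hVp1)
      norm_num at h
      have h2 := h.const_mul ((Real.sqrt q : ℂ) * Complex.I / (2 * r))
      simpa using h2
    have hnorm := hbr2.norm
    rw [norm_zero] at hnorm
    apply squeeze_zero_norm _ hnorm
    intro N
    rw [hfun2 N, norm_mul, norm_pow, norm_neg, norm_one, one_pow, one_mul]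
end
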